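/- Consider offline alignment with finite context set X, finite action set A, context distribution ρ with ρ(x) > 0, reference policy πref with πref(a|x) > 0 for all x, a, and Rmax ≥ 1. Let R be a finite class of reward functions r : X×A → [0, Rmax] containing the true reward r*. Let D be a preference dataset of n i.i.d. Bradley–Terry samples, and let r̂ be any maximizer over R of Σ_{(x,a₊,a₋)∈D} log σ(r(x,a₊) − r(x,a₋)). Then for every δ ∈ (0,1), with probability at least 1 − δ, Σ_x ρ(x) Σ_{a,b} πref(a|x)·πref(b|x)·( (r̂(x,a) − r̂(x,b)) − (r*(x,a) − r*(x,b)) )² ≤ 32·Rmax²·e^{4Rmax}·log(|R|/δ)/n. -/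

import Mathlib

open scoped Classical

/-- The sigmoid function `σ(u) = e^u / (1 + e^u)`. -/
noncomputable def sigmoid (u : ℝ) : ℝ := Real.exp u / (1 + Real.exp u)

/-- Probability of observing the Bradley–Terry preference sample `(x, a₊, a₋)`. -/
noncomputable def BTweight {X A : Type*}
    (ρ : X → ℝ) (pref : X → A → ℝ) (rstar : X → A → ℝ) (s : X × A × A) : ℝ :=
  2 * ρ s.1 * pref s.1 s.2.1 * pref s.1 s.2.2 *
    sigmoid (rstar s.1 s.2.1 - rstar s.1 s.2.2)

/-- The Bradley–Terry maximum-likelihood objective of a reward model `r` on a dataset `D`. -/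
noncomputable def MLEobj {X A : Type*} {n : ℕ}
    (r : X → A → ℝ) (D : Fin n → X × A × A) : ℝ :=
  ∑ i, Real.log (sigmoid (r (D i).1 (D i).2.1 - r (D i).1 (D i).2.2))

lemma sigmoid_pos (u : ℝ) : 0 < sigmoid u :=
  div_pos (Real.exp_pos u) (by positivity)

lemma sigmoid_lt_one (u : ℝ) : sigmoid u < 1 := by
  rw [sigmoid, div_lt_one (by positivity)]; linarith

lemma sigmoid_add_neg (u : ℝ) : sigmoid u + sigmoid (-u) = 1 := by
  rw [sigmoid, sigmoid, Real.exp_neg]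
  have h := (Real.exp_pos u).ne'
  field_simp
  ring

lemma sigmoid_sub_ge (R u v : ℝ) (hu1 : -R ≤ u) (hu2 : u ≤ R) (hv1 : -R ≤ v) (hv2 : v ≤ R)
    (huv : v ≤ u) : (u - v) / (4 * Real.exp R) ≤ sigmoid u - sigmoid v := by
  have hpu : (0:ℝ) < 1 + Real.exp u := by positivity
  have hpv : (0:ℝ) < 1 + Real.exp v := by positivity
  have h1 : sigmoid u - sigmoid v =
      (Real.exp u - Real.exp v) / ((1 + Real.exp u) * (1 + Real.exp v)) := by
    rw [sigmoid, sigmoid]; field_simp; ring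
  have h2 : Real.exp ((u+v)/2) * (u - v) ≤ Real.exp u - Real.exp v := by
    have hs : (u-v)/2 ≤ Real.sinh ((u-v)/2) := Real.self_le_sinh_iff.2 (by linarith)
    rw [Real.sinh_eq] at hs
    have e1 : Real.exp u = Real.exp ((u+v)/2) * Real.exp ((u-v)/2) := by
      rw [← Real.exp_add]; ring_nf
    have e2 : Real.exp v = Real.exp ((u+v)/2) * Real.exp (-((u-v)/2)) := by
      rw [← Real.exp_add]; ring_nf
    have hmid : (0:ℝ) < Real.exp ((u+v)/2) := Real.exp_pos _
    nlinarith [hs, hmid]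
  have h3 : (1 + Real.exp u) * (1 + Real.exp v) ≤ 4 * Real.exp R * Real.exp ((u+v)/2) := by
    have b1 : 1 + Real.exp u ≤ 2 * Real.exp (R/2) * Real.exp (u/2) := by
      have c1 : (1:ℝ) ≤ Real.exp (R/2) * Real.exp (u/2) := by
        rw [← Real.exp_add]; have : (0:ℝ) ≤ R/2 + u/2 := by linarith
        linarith [Real.add_one_le_exp (R/2 + u/2)]
      have c2 : Real.exp u ≤ Real.exp (R/2) * Real.exp (u/2) := by
        rw [← Real.exp_add]; exact Real.exp_le_exp.2 (by linarith)
      linarith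
    have b2 : 1 + Real.exp v ≤ 2 * Real.exp (R/2) * Real.exp (v/2) := by
      have c1 : (1:ℝ) ≤ Real.exp (R/2) * Real.exp (v/2) := by
        rw [← Real.exp_add]; have : (0:ℝ) ≤ R/2 + v/2 := by linarith
        linarith [Real.add_one_le_exp (R/2 + v/2)]
      have c2 : Real.exp v ≤ Real.exp (R/2) * Real.exp (v/2) := by
        rw [← Real.exp_add]; exact Real.exp_le_exp.2 (by linarith)
      linarith
    calc (1 + Real.exp u) * (1 + Real.exp v)
        ≤ (2 * Real.exp (R/2) * Real.exp (u/2)) * (2 * Real.exp (R/2) * Real.exp (v/2)) := by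
          apply mul_le_mul b1 b2 (by positivity) (by positivity)
      _ = 4 * Real.exp R * Real.exp ((u+v)/2) := by
          rw [show Real.exp R = Real.exp (R/2) * Real.exp (R/2) by rw [← Real.exp_add]; ring_nf,
              show Real.exp ((u+v)/2) = Real.exp (u/2) * Real.exp (v/2) by rw [← Real.exp_add]; ring_nf]
          ring
  rw [h1, div_le_div_iff₀ (by positivity) (by positivity)]
  have hmid : (0:ℝ) < Real.exp ((u+v)/2) := Real.exp_pos _
  have hh1 : (u - v) * ((1 + Real.exp u) * (1 + Real.exp v)) ≤
      (u - v) * (4 * Real.exp R * Real.exp ((u+v)/2)) :=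
    mul_le_mul_of_nonneg_left h3 (by linarith)
  have hh2 : (4 * Real.exp R) * (Real.exp ((u+v)/2) * (u - v)) ≤
      (4 * Real.exp R) * (Real.exp u - Real.exp v) :=
    mul_le_mul_of_nonneg_left h2 (by positivity)
  nlinarith [hh1, hh2]

lemma sq_diff_le_sigmoid_aux (R u v : ℝ) (hu1 : -R ≤ u) (hu2 : u ≤ R) (hv1 : -R ≤ v) (hv2 : v ≤ R)
    (huv : v ≤ u) :
    (u - v)^2 ≤ 64 * Real.exp (2*R) * (Real.sqrt (sigmoid u) - Real.sqrt (sigmoid v))^2 := by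
  have hd := sigmoid_sub_ge R u v hu1 hu2 hv1 hv2 huv
  have hσu := sigmoid_pos u
  have hσv := sigmoid_pos v
  have hσu1 := sigmoid_lt_one u
  have hσv1 := sigmoid_lt_one v
  have hsu : Real.sqrt (sigmoid u) ≤ 1 := by
    rw [show (1:ℝ) = Real.sqrt 1 by simp]; exact Real.sqrt_le_sqrt (le_of_lt hσu1)
  have hsv : Real.sqrt (sigmoid v) ≤ 1 := by
    rw [show (1:ℝ) = Real.sqrt 1 by simp]; exact Real.sqrt_le_sqrt (le_of_lt hσv1)
  have hmono : Real.sqrt (sigmoid v) ≤ Real.sqrt (sigmoid u) := by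
    apply Real.sqrt_le_sqrt
    have : (0:ℝ) ≤ (u - v) / (4 * Real.exp R) := div_nonneg (by linarith) (by positivity)
    linarith
  have hfac : (Real.sqrt (sigmoid u) - Real.sqrt (sigmoid v)) *
      (Real.sqrt (sigmoid u) + Real.sqrt (sigmoid v)) = sigmoid u - sigmoid v := by
    have a := Real.sq_sqrt (le_of_lt hσu)
    have b := Real.sq_sqrt (le_of_lt hσv)
    nlinarith [a, b]
  set t := Real.sqrt (sigmoid u) - Real.sqrt (sigmoid v) with ht
  have ht0 : 0 ≤ t := by simp [ht]; linarith
  have hd2 : sigmoid u - sigmoid v ≤ 2 * t := by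
    rw [← hfac]
    nlinarith [ht0, hsu, hsv]
  have hE : Real.exp (2*R) = Real.exp R * Real.exp R := by rw [← Real.exp_add]; ring_nf
  have hEpos : (0:ℝ) < Real.exp R := Real.exp_pos R
  have key : u - v ≤ 8 * Real.exp R * t := by
    have := hd.trans hd2
    rw [div_le_iff₀ (by positivity)] at this
    linarith
  nlinarith [key, ht0, hEpos, sq_nonneg t, mul_le_mul key key (by linarith) (by positivity)]

lemma sq_diff_le_sigmoid (R u v : ℝ) (hu1 : -R ≤ u) (hu2 : u ≤ R) (hv1 : -R ≤ v) (hv2 : v ≤ R) :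
    (u - v)^2 ≤ 64 * Real.exp (2*R) * (Real.sqrt (sigmoid u) - Real.sqrt (sigmoid v))^2 := by
  rcases le_total v u with h | h
  · exact sq_diff_le_sigmoid_aux R u v hu1 hu2 hv1 hv2 h
  · have := sq_diff_le_sigmoid_aux R v u hv1 hv2 hu1 hu2 h
    calc (u-v)^2 = (v-u)^2 := by ring
      _ ≤ 64 * Real.exp (2*R) * (Real.sqrt (sigmoid v) - Real.sqrt (sigmoid u))^2 := this
      _ = 64 * Real.exp (2*R) * (Real.sqrt (sigmoid u) - Real.sqrt (sigmoid v))^2 := by ring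

lemma prod_sqrt {ι : Type*} (s : Finset ι) (f : ι → ℝ) (hf : ∀ i ∈ s, 0 ≤ f i) :
    ∏ i ∈ s, Real.sqrt (f i) = Real.sqrt (∏ i ∈ s, f i) := by
  induction s using Finset.cons_induction with
  | empty => simp
  | cons a s ha ih =>
    rw [Finset.prod_cons, Finset.prod_cons,
      ih (fun i hi => hf i (Finset.mem_cons_of_mem hi)),
      Real.sqrt_mul (hf a (Finset.mem_cons_self a s))]

/-- Symmetric base measure `2 ρ(x) π(a|x) π(b|x)` on samples. -/
noncomputable def mM {X A : Type*} (ρ : X → ℝ) (pref : X → A → ℝ) (s : X × A × A) : ℝ :=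
  2 * ρ s.1 * pref s.1 s.2.1 * pref s.1 s.2.2

/-- Sigmoid of the reward difference of a sample. -/
noncomputable def sgm {X A : Type*} (r : X → A → ℝ) (s : X × A × A) : ℝ :=
  sigmoid (r s.1 s.2.1 - r s.1 s.2.2)

lemma BTweight_eq {X A : Type*} (ρ : X → ℝ) (pref : X → A → ℝ) (rstar : X → A → ℝ)
    (s : X × A × A) : BTweight ρ pref rstar s = mM ρ pref s * sgm rstar s := rfl

lemma sum_mM_sgm {X A : Type*} [Fintype X] [Fintype A] (ρ : X → ℝ) (pref : X → A → ℝ)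
    (hprefsum : ∀ x, ∑ a, pref x a = 1) (r : X → A → ℝ) :
    ∑ s : X × A × A, mM ρ pref s * sgm r s = ∑ x, ρ x := by
  rw [Fintype.sum_prod_type]
  apply Finset.sum_congr rfl
  intro x _
  rw [Fintype.sum_prod_type]
  show ∑ a, ∑ b, (2 * ρ x * pref x a * pref x b) * sigmoid (r x a - r x b) = ρ x
  have h2 : ∑ a, ∑ b, ρ x * pref x a * pref x b * sigmoid (r x a - r x b)
      = ∑ a, ∑ b, ρ x * pref x a * pref x b * sigmoid (r x b - r x a) := by
    rw [Finset.sum_comm]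
    exact Finset.sum_congr rfl fun a _ => Finset.sum_congr rfl fun b _ => by ring
  have expand : ∑ a, ∑ b, (2 * ρ x * pref x a * pref x b) * sigmoid (r x a - r x b)
      = (∑ a, ∑ b, ρ x * pref x a * pref x b * sigmoid (r x a - r x b))
        + (∑ a, ∑ b, ρ x * pref x a * pref x b * sigmoid (r x a - r x b)) := by
    rw [← Finset.sum_add_distrib]
    exact Finset.sum_congr rfl fun a _ => by
      rw [← Finset.sum_add_distrib]
      exact Finset.sum_congr rfl fun b _ => by ring
  rw [expand]
  nth_rewrite 2 [h2]
  rw [← Finset.sum_add_distrib]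
  have step : ∀ a : A, (∑ b, ρ x * pref x a * pref x b * sigmoid (r x a - r x b))
      + (∑ b, ρ x * pref x a * pref x b * sigmoid (r x b - r x a))
      = ρ x * pref x a := by
    intro a
    rw [← Finset.sum_add_distrib]
    have : ∀ b : A, ρ x * pref x a * pref x b * sigmoid (r x a - r x b)
        + ρ x * pref x a * pref x b * sigmoid (r x b - r x a)
        = ρ x * pref x a * pref x b := by
      intro b
      have hs := sigmoid_add_neg (r x a - r x b)
      rw [show r x b - r x a = -(r x a - r x b) by ring]
      linear_combination (ρ x * pref x a * pref x b) * hs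
    rw [Finset.sum_congr rfl fun b _ => this b, ← Finset.mul_sum, hprefsum x, mul_one]
  rw [Finset.sum_congr rfl fun a _ => step a, ← Finset.mul_sum, hprefsum x, mul_one]

set_option maxHeartbeats 1600000 in
/-- Off-policy reward estimation guarantee for maximum-likelihood reward estimation under the
Bradley–Terry model (Lemma F.2): with probability at least `1 - δ` over `n` samples, every
maximizer `r̂` over the reward class of the Bradley–Terry log-likelihood satisfies
`Σ_x ρ(x) Σ_{a,b} πref(a|x)πref(b|x)((r̂(x,a) − r̂(x,b)) − (r*(x,a) − r*(x,b)))²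
  ≤ 32·Rmax²·e^{4Rmax}·log(|R|/δ)/n`. -/
theorem MLE_reward_estimation
    {X A : Type*} [Fintype X] [Fintype A] [Nonempty X] [Nonempty A]
    (ρ : X → ℝ) (hρ : ∀ x, 0 < ρ x) (hρsum : ∑ x, ρ x = 1)
    (pref : X → A → ℝ) (hpref : ∀ x a, 0 < pref x a)
    (hprefsum : ∀ x, ∑ a, pref x a = 1)
    (Rmax : ℝ) (hRmax : 1 ≤ Rmax)
    (Rcl : Finset (X → A → ℝ))
    (hRcl : ∀ r ∈ Rcl, ∀ x a, r x a ∈ Set.Icc (0 : ℝ) Rmax)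
    (rstar : X → A → ℝ) (hrstarmem : rstar ∈ Rcl)
    (n : ℕ) (hn : 0 < n)
    (δ : ℝ) (hδ : δ ∈ Set.Ioo (0 : ℝ) 1) :
    1 - δ ≤ ∑ D : Fin n → X × A × A,
      if (∀ rhat ∈ Rcl,
            (∀ r ∈ Rcl, MLEobj r D ≤ MLEobj rhat D) →
            ∑ x, ρ x * ∑ a, ∑ b, pref x a * pref x b *
                ((rhat x a - rhat x b) - (rstar x a - rstar x b)) ^ 2 ≤
              32 * Rmax ^ 2 * Real.exp (4 * Rmax) *
                Real.log ((Rcl.card : ℝ) / δ) / (n : ℝ))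
      then ∏ i, BTweight ρ pref rstar (D i) else 0 := by

  classical
  obtain ⟨hδ0, hδ1⟩ := hδ
  have hRpos : (0:ℝ) < Rmax := lt_of_lt_of_le one_pos hRmax
  have hcard : (1:ℝ) ≤ (Rcl.card : ℝ) := by
    exact_mod_cast Nat.one_le_iff_ne_zero.2 (Finset.card_ne_zero_of_mem hrstarmem)
  have hcard0 : (0:ℝ) < (Rcl.card : ℝ) := lt_of_lt_of_le one_pos hcard
  have hnpos : (0:ℝ) < (n:ℝ) := by exact_mod_cast hn
  have hm_pos : ∀ s : X × A × A, 0 < mM ρ pref s := by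
    intro s
    have h1 := hρ s.1; have h2 := hpref s.1 s.2.1; have h3 := hpref s.1 s.2.2
    unfold mM; positivity
  have hsg_pos : ∀ (r : X → A → ℝ) (s : X × A × A), 0 < sgm r s := fun r s => sigmoid_pos _
  have hw_pos : ∀ s, 0 < BTweight ρ pref rstar s := fun s => by
    rw [BTweight_eq]; exact mul_pos (hm_pos s) (hsg_pos rstar s)
  have hmsum : ∀ r : X → A → ℝ, ∑ s : X × A × A, mM ρ pref s * sgm r s = 1 := fun r => by
    rw [sum_mM_sgm ρ pref hprefsum r, hρsum]
  have hwsum : ∑ s : X × A × A, BTweight ρ pref rstar s = 1 := by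
    rw [Finset.sum_congr rfl fun s _ => BTweight_eq ρ pref rstar s]
    exact hmsum rstar
  set Z : (X → A → ℝ) → (X × A × A) → ℝ := fun r s => Real.sqrt (sgm r s / sgm rstar s)
    with hZdef
  set c : (X → A → ℝ) → ℝ := fun r => ∑ s, BTweight ρ pref rstar s * Z r s with hcdef
  have hcfold : ∀ r, ∑ s : X × A × A, BTweight ρ pref rstar s * Z r s = c r := fun r => rfl
  have hZpos : ∀ r s, 0 < Z r s := fun r s =>
    Real.sqrt_pos.2 (div_pos (hsg_pos r s) (hsg_pos rstar s))
  have hcpos : ∀ r, 0 < c r := fun r =>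
    Finset.sum_pos (fun s _ => mul_pos (hw_pos s) (hZpos r s)) Finset.univ_nonempty
  have hwZ : ∀ r s, BTweight ρ pref rstar s * Z r s
      = mM ρ pref s * (Real.sqrt (sgm r s) * Real.sqrt (sgm rstar s)) := by
    intro r s
    have hne : Real.sqrt (sgm rstar s) ≠ 0 := ne_of_gt (Real.sqrt_pos.2 (hsg_pos rstar s))
    have h2 : sgm rstar s = Real.sqrt (sgm rstar s) * Real.sqrt (sgm rstar s) :=
      (Real.mul_self_sqrt (le_of_lt (hsg_pos rstar s))).symm
    rw [BTweight_eq]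
    show mM ρ pref s * sgm rstar s * Real.sqrt (sgm r s / sgm rstar s) = _
    rw [Real.sqrt_div (le_of_lt (hsg_pos r s))]
    conv_lhs => rw [h2]
    field_simp
    ring_nf
    rw [Real.sqrt_sq (Real.sqrt_nonneg _)]
    ring
  have hH : ∀ r, ∑ s : X × A × A,
      mM ρ pref s * (Real.sqrt (sgm r s) - Real.sqrt (sgm rstar s))^2 = 2 - 2 * c r := by
    intro r
    have e1 : ∀ s : X × A × A,
        mM ρ pref s * (Real.sqrt (sgm r s) - Real.sqrt (sgm rstar s))^2
        = mM ρ pref s * sgm r s + mM ρ pref s * sgm rstar s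
          - 2 * (BTweight ρ pref rstar s * Z r s) := by
      intro s
      rw [hwZ]
      have ha := Real.sq_sqrt (le_of_lt (hsg_pos r s))
      have hb := Real.sq_sqrt (le_of_lt (hsg_pos rstar s))
      linear_combination (mM ρ pref s) * ha + (mM ρ pref s) * hb
    rw [Finset.sum_congr rfl fun s _ => e1 s, Finset.sum_sub_distrib, Finset.sum_add_distrib,
      hmsum r, hmsum rstar, ← Finset.mul_sum, hcfold r]
    ring
  have hfact : ∀ r, ∑ D : Fin n → X × A × A,
      ∏ i, (BTweight ρ pref rstar (D i) * Z r (D i)) = (c r)^n := by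
    intro r
    have h1 := Finset.sum_pow' (Finset.univ : Finset (X × A × A))
      (fun s => BTweight ρ pref rstar s * Z r s) n
    rw [Fintype.piFinset_univ] at h1
    exact h1.symm
  have hWsum : ∑ D : Fin n → X × A × A, ∏ i, BTweight ρ pref rstar (D i) = 1 := by
    have h1 := Finset.sum_pow' (Finset.univ : Finset (X × A × A))
      (fun s => BTweight ρ pref rstar s) n
    rw [hwsum, one_pow, Fintype.piFinset_univ] at h1
    exact h1.symm
  -- Chernoff bound for a fixed reward model
  have hcher : ∀ r ∈ Rcl, ∑ D : Fin n → X × A × A,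
      (if ((Rcl.card:ℝ)/δ) * (c r)^n < ∏ i, Z r (D i)
       then ∏ i, BTweight ρ pref rstar (D i) else 0)
      ≤ δ / (Rcl.card:ℝ) := by
    intro r _
    have hcn : (0:ℝ) < (c r)^n := pow_pos (hcpos r) n
    have hκpos : (0:ℝ) < δ / ((Rcl.card:ℝ) * (c r)^n) := by positivity
    have key : ∀ D : Fin n → X × A × A,
        (if ((Rcl.card:ℝ)/δ) * (c r)^n < ∏ i, Z r (D i)
         then ∏ i, BTweight ρ pref rstar (D i) else 0)
        ≤ δ / ((Rcl.card:ℝ) * (c r)^n) * ∏ i, (BTweight ρ pref rstar (D i) * Z r (D i)) := by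
      intro D
      have hWpos : 0 < ∏ i, BTweight ρ pref rstar (D i) := Finset.prod_pos fun i _ => hw_pos _
      have hZp : 0 < ∏ i, Z r (D i) := Finset.prod_pos fun i _ => hZpos r _
      have hsplit : ∏ i, (BTweight ρ pref rstar (D i) * Z r (D i))
          = (∏ i, BTweight ρ pref rstar (D i)) * ∏ i, Z r (D i) := Finset.prod_mul_distrib
      split_ifs with hbad
      · have h1 : (1:ℝ) ≤ δ / ((Rcl.card:ℝ) * (c r)^n) * ∏ i, Z r (D i) := by
          have heq : δ / ((Rcl.card:ℝ) * (c r)^n) * (((Rcl.card:ℝ)/δ) * (c r)^n) = 1 := by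
            field_simp
          nlinarith [mul_lt_mul_of_pos_left hbad hκpos]
        calc ∏ i, BTweight ρ pref rstar (D i)
            = (∏ i, BTweight ρ pref rstar (D i)) * 1 := (mul_one _).symm
          _ ≤ (∏ i, BTweight ρ pref rstar (D i)) *
              (δ / ((Rcl.card:ℝ) * (c r)^n) * ∏ i, Z r (D i)) :=
              mul_le_mul_of_nonneg_left h1 (le_of_lt hWpos)
          _ = δ / ((Rcl.card:ℝ) * (c r)^n) *
              ∏ i, (BTweight ρ pref rstar (D i) * Z r (D i)) := by rw [hsplit]; ring
      · exact le_of_lt (mul_pos hκpos (by rw [hsplit]; exact mul_pos hWpos hZp))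
    refine le_trans (Finset.sum_le_sum fun D _ => key D) ?_
    rw [← Finset.mul_sum, hfact r]
    have : δ / ((Rcl.card:ℝ) * (c r)^n) * (c r)^n = δ / (Rcl.card:ℝ) := by
      field_simp
    linarith
  -- deterministic consequence of the good event
  have hEimp : ∀ D : Fin n → X × A × A,
      (∀ r ∈ Rcl, ∏ i, Z r (D i) ≤ ((Rcl.card : ℝ)/δ) * (c r)^n) →
      ∀ rhat ∈ Rcl, (∀ r ∈ Rcl, MLEobj r D ≤ MLEobj rhat D) →
      ∑ x, ρ x * ∑ a, ∑ b, pref x a * pref x b *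
          ((rhat x a - rhat x b) - (rstar x a - rstar x b))^2
        ≤ 32 * Rmax^2 * Real.exp (4*Rmax) * Real.log ((Rcl.card : ℝ)/δ) / (n:ℝ) := by
    intro D hE rhat hmem hmax
    set L := Real.log ((Rcl.card : ℝ)/δ) with hLdef
    have hLpos : 0 < L := Real.log_pos ((one_lt_div hδ0).2 (lt_of_lt_of_le hδ1 hcard))
    have eprod : ∀ r : X → A → ℝ, ∏ i, sgm r (D i) = Real.exp (MLEobj r D) := by
      intro r
      rw [MLEobj, Real.exp_sum]
      exact Finset.prod_congr rfl fun i _ => (Real.exp_log (hsg_pos r (D i))).symm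
    have hexple : ∏ i, sgm rstar (D i) ≤ ∏ i, sgm rhat (D i) := by
      rw [eprod, eprod]; exact Real.exp_le_exp.2 (hmax rstar hrstarmem)
    have hZ1 : 1 ≤ ∏ i, Z rhat (D i) := by
      have hform : ∏ i, Z rhat (D i)
          = Real.sqrt ((∏ i, sgm rhat (D i)) / ∏ i, sgm rstar (D i)) := by
        rw [← Finset.prod_div_distrib]
        exact prod_sqrt _ _ fun i _ =>
          le_of_lt (div_pos (hsg_pos rhat (D i)) (hsg_pos rstar (D i)))
      rw [hform]
      have h1 : (1:ℝ) ≤ (∏ i, sgm rhat (D i)) / ∏ i, sgm rstar (D i) :=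
        (one_le_div (Finset.prod_pos fun i _ => hsg_pos rstar (D i))).2 hexple
      calc (1:ℝ) = Real.sqrt 1 := by simp
        _ ≤ _ := Real.sqrt_le_sqrt h1
    have hδcn : δ / (Rcl.card : ℝ) ≤ (c rhat)^n := by
      have h1 : (1:ℝ) ≤ ((Rcl.card:ℝ)/δ) * (c rhat)^n := le_trans hZ1 (hE rhat hmem)
      have h2 : (0:ℝ) < δ / (Rcl.card:ℝ) := div_pos hδ0 hcard0
      have h3 := mul_le_mul_of_nonneg_left h1 (le_of_lt h2)
      rw [mul_one] at h3
      calc δ / (Rcl.card:ℝ)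
          ≤ δ / (Rcl.card:ℝ) * (((Rcl.card:ℝ)/δ) * (c rhat)^n) := h3
        _ = (c rhat)^n := by field_simp
    have hlog : (n:ℝ) * (2 - 2 * c rhat) ≤ 2 * L := by
      have h1 : Real.log (δ / (Rcl.card:ℝ)) ≤ (n:ℝ) * Real.log (c rhat) := by
        calc Real.log (δ / (Rcl.card:ℝ)) ≤ Real.log ((c rhat)^n) :=
              Real.log_le_log (div_pos hδ0 hcard0) hδcn
          _ = (n:ℝ) * Real.log (c rhat) := by rw [Real.log_pow]
      have h2 : Real.log (c rhat) ≤ c rhat - 1 := Real.log_le_sub_one_of_pos (hcpos rhat)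
      have h3 : Real.log (δ / (Rcl.card:ℝ)) = -L := by
        rw [hLdef, ← Real.log_inv]
        congr 1
        field_simp
      have h4 : (n:ℝ) * Real.log (c rhat) ≤ (n:ℝ) * (c rhat - 1) :=
        mul_le_mul_of_nonneg_left h2 (le_of_lt hnpos)
      have h5 : -L ≤ (n:ℝ) * (c rhat - 1) := by rw [← h3]; exact le_trans h1 h4
      nlinarith [h5]
    have hq : ∀ s : X × A × A,
        ((rhat s.1 s.2.1 - rhat s.1 s.2.2) - (rstar s.1 s.2.1 - rstar s.1 s.2.2))^2
        ≤ 64 * Real.exp (2*Rmax) *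
          (Real.sqrt (sgm rhat s) - Real.sqrt (sgm rstar s))^2 := by
      intro s
      obtain ⟨h1, h2⟩ := hRcl rhat hmem s.1 s.2.1
      obtain ⟨h3, h4⟩ := hRcl rhat hmem s.1 s.2.2
      obtain ⟨h5, h6⟩ := hRcl rstar hrstarmem s.1 s.2.1
      obtain ⟨h7, h8⟩ := hRcl rstar hrstarmem s.1 s.2.2
      exact sq_diff_le_sigmoid Rmax _ _ (by linarith) (by linarith) (by linarith) (by linarith)
    have hLHS : (∑ x, ρ x * ∑ a, ∑ b, pref x a * pref x b *
          ((rhat x a - rhat x b) - (rstar x a - rstar x b))^2)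
        = 1/2 * ∑ s : X × A × A, mM ρ pref s *
            ((rhat s.1 s.2.1 - rhat s.1 s.2.2) - (rstar s.1 s.2.1 - rstar s.1 s.2.2))^2 := by
      rw [Finset.mul_sum]
      simp only [Fintype.sum_prod_type]
      apply Finset.sum_congr rfl; intro x _
      rw [Finset.mul_sum]
      apply Finset.sum_congr rfl; intro a _
      rw [Finset.mul_sum]
      apply Finset.sum_congr rfl; intro b _
      simp only [mM]
      ring
    rw [hLHS]
    have hsum1 : ∑ s : X × A × A, mM ρ pref s *
          ((rhat s.1 s.2.1 - rhat s.1 s.2.2) - (rstar s.1 s.2.1 - rstar s.1 s.2.2))^2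
        ≤ 64 * Real.exp (2*Rmax) * (2 - 2 * c rhat) := by
      calc ∑ s : X × A × A, mM ρ pref s *
            ((rhat s.1 s.2.1 - rhat s.1 s.2.2) - (rstar s.1 s.2.1 - rstar s.1 s.2.2))^2
          ≤ ∑ s : X × A × A, mM ρ pref s * (64 * Real.exp (2*Rmax) *
              (Real.sqrt (sgm rhat s) - Real.sqrt (sgm rstar s))^2) :=
            Finset.sum_le_sum fun s _ =>
              mul_le_mul_of_nonneg_left (hq s) (le_of_lt (hm_pos s))
        _ = 64 * Real.exp (2*Rmax) * ∑ s : X × A × A, mM ρ pref s *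
              (Real.sqrt (sgm rhat s) - Real.sqrt (sgm rstar s))^2 := by
            rw [Finset.mul_sum]
            exact Finset.sum_congr rfl fun s _ => by ring
        _ = 64 * Real.exp (2*Rmax) * (2 - 2 * c rhat) := by rw [hH rhat]
    have h2c : 2 - 2 * c rhat ≤ 2 * L / (n:ℝ) := by
      rw [le_div_iff₀ hnpos]
      nlinarith [hlog]
    have hkey : 64 * Real.exp (2*Rmax) ≤ 32 * Rmax^2 * Real.exp (4*Rmax) := by
      have heR : (2:ℝ) ≤ Real.exp Rmax := by
        have := Real.add_one_le_exp Rmax; linarith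
      have e2 : Real.exp (2*Rmax) = Real.exp Rmax * Real.exp Rmax := by
        rw [← Real.exp_add]; ring_nf
      have h4 : (4:ℝ) ≤ Real.exp (2*Rmax) := by rw [e2]; nlinarith [heR]
      have hr2 : (1:ℝ) ≤ Rmax^2 := by nlinarith
      have e4 : Real.exp (4*Rmax) = Real.exp (2*Rmax) * Real.exp (2*Rmax) := by
        rw [← Real.exp_add]; ring_nf
      have hc4 : (4:ℝ) ≤ Rmax^2 * Real.exp (2*Rmax) := by nlinarith [h4, hr2]
      rw [e4]
      nlinarith [hc4, Real.exp_pos (2*Rmax)]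
    calc 1/2 * ∑ s : X × A × A, mM ρ pref s *
          ((rhat s.1 s.2.1 - rhat s.1 s.2.2) - (rstar s.1 s.2.1 - rstar s.1 s.2.2))^2
        ≤ 1/2 * (64 * Real.exp (2*Rmax) * (2 - 2 * c rhat)) := by linarith [hsum1]
      _ ≤ 1/2 * (64 * Real.exp (2*Rmax) * (2 * L / (n:ℝ))) := by
          have := mul_le_mul_of_nonneg_left h2c (le_of_lt (by positivity :
            (0:ℝ) < 64 * Real.exp (2*Rmax)))
          linarith
      _ = 64 * Real.exp (2*Rmax) * L / (n:ℝ) := by ring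
      _ ≤ 32 * Rmax^2 * Real.exp (4*Rmax) * L / (n:ℝ) := by
          have h1 : 64 * Real.exp (2*Rmax) * L ≤ 32 * Rmax^2 * Real.exp (4*Rmax) * L :=
            mul_le_mul_of_nonneg_right hkey (le_of_lt hLpos)
          exact (div_le_div_iff_of_pos_right hnpos).2 h1
  -- assembly: union bound and comparison with the goal indicator
  have hstep1 : ∀ D : Fin n → X × A × A,
      (if (∀ r ∈ Rcl, ∏ i, Z r (D i) ≤ ((Rcl.card:ℝ)/δ) * (c r)^n)
       then ∏ i, BTweight ρ pref rstar (D i) else 0)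
      ≤ (if (∀ rhat ∈ Rcl,
            (∀ r ∈ Rcl, MLEobj r D ≤ MLEobj rhat D) →
            ∑ x, ρ x * ∑ a, ∑ b, pref x a * pref x b *
                ((rhat x a - rhat x b) - (rstar x a - rstar x b)) ^ 2 ≤
              32 * Rmax ^ 2 * Real.exp (4 * Rmax) *
                Real.log ((Rcl.card : ℝ) / δ) / (n : ℝ))
         then ∏ i, BTweight ρ pref rstar (D i) else 0) := by
    intro D
    split_ifs with h1 h2
    · exact le_refl _
    · exact absurd (hEimp D h1) h2
    · exact le_of_lt (Finset.prod_pos fun i _ => hw_pos _)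
    · exact le_refl _
  have hsplitsum : ∑ D : Fin n → X × A × A,
      (if (∀ r ∈ Rcl, ∏ i, Z r (D i) ≤ ((Rcl.card:ℝ)/δ) * (c r)^n)
       then ∏ i, BTweight ρ pref rstar (D i) else 0)
      = 1 - ∑ D : Fin n → X × A × A,
      (if (∀ r ∈ Rcl, ∏ i, Z r (D i) ≤ ((Rcl.card:ℝ)/δ) * (c r)^n)
       then 0 else ∏ i, BTweight ρ pref rstar (D i)) := by
    rw [eq_sub_iff_add_eq, ← Finset.sum_add_distrib, ← hWsum]
    exact Finset.sum_congr rfl fun D _ => by split_ifs <;> simp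
  have hbad : ∑ D : Fin n → X × A × A,
      (if (∀ r ∈ Rcl, ∏ i, Z r (D i) ≤ ((Rcl.card:ℝ)/δ) * (c r)^n)
       then 0 else ∏ i, BTweight ρ pref rstar (D i)) ≤ δ := by
    have hpt : ∀ D : Fin n → X × A × A,
        (if (∀ r ∈ Rcl, ∏ i, Z r (D i) ≤ ((Rcl.card:ℝ)/δ) * (c r)^n)
         then 0 else ∏ i, BTweight ρ pref rstar (D i))
        ≤ ∑ r ∈ Rcl, (if ((Rcl.card:ℝ)/δ) * (c r)^n < ∏ i, Z r (D i)
            then ∏ i, BTweight ρ pref rstar (D i) else 0) := by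
      intro D
      split_ifs with h
      · refine Finset.sum_nonneg fun r _ => ?_
        split_ifs
        · exact le_of_lt (Finset.prod_pos fun i _ => hw_pos _)
        · exact le_refl 0
      · push_neg at h
        obtain ⟨r0, hr0, hbad0⟩ := h
        have := Finset.single_le_sum
          (f := fun r => if ((Rcl.card:ℝ)/δ) * (c r)^n < ∏ i, Z r (D i)
            then ∏ i, BTweight ρ pref rstar (D i) else 0)
          (fun r _ => by
            split_ifs
            · exact le_of_lt (Finset.prod_pos fun i _ => hw_pos _)
            · exact le_refl 0) hr0
        rwa [if_pos hbad0] at this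
    refine le_trans (Finset.sum_le_sum fun D _ => hpt D) ?_
    rw [Finset.sum_comm]
    refine le_trans (Finset.sum_le_sum hcher) ?_
    rw [Finset.sum_const, nsmul_eq_mul]
    have hne : (Rcl.card:ℝ) ≠ 0 := ne_of_gt hcard0
    have : (Rcl.card:ℝ) * (δ / (Rcl.card:ℝ)) = δ := by field_simp
    linarith
  refine le_trans ?_ (Finset.sum_le_sum fun (D : Fin n → X × A × A) _ => hstep1 D)
  rw [hsplitsum]
  linarith [hbad]
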